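/- Let μ_0,…,μ_K be probability distributions on a finite set S with ∪_k supp(μ_k) = S, and let ε ∈ [0,1) be such that for every nonempty E ⊆ S there exists k with μ_k(E) > ε (so the ε-Ordered Surprises rule P(·|E) = BU(μ_{k*},E), k* = min{k : μ_k(E) > ε}, is well defined). If ε = 0 then P is a conditional probability system provided the supports of μ_0,…,μ_K are pairwise disjoint; but if ε > 0, P need not satisfy the chain rule: there exist S, μ_0, μ_1 and ε > 0 and events G ⊆ F ⊆ E with F nonempty such that P(G|E) ≠ P(G|F)·P(F|E). -/

import Mathlib

open Finset

variable {S : Type*} [Fintype S] [DecidableEq S]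

def IsProb (μ : S → ℝ) : Prop := (∀ s, 0 ≤ μ s) ∧ ∑ s, μ s = 1

def mass (μ : S → ℝ) (E : Finset S) : ℝ := ∑ s ∈ E, μ s

noncomputable def BU (μ : S → ℝ) (E : Finset S) : S → ℝ :=
  fun s => if s ∈ E then μ s / mass μ E else 0

def OSRep (P : Finset S → S → ℝ) (K : ℕ) (μ : ℕ → S → ℝ) : Prop :=
  (∀ k ≤ K, IsProb (μ k)) ∧
  (∀ s : S, ∃ k ≤ K, 0 < μ k s) ∧
  (∀ E : Finset S, E.Nonempty → ∀ k ≤ K,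
    0 < mass (μ k) E → (∀ j < k, mass (μ j) E = 0) → P E = BU (μ k) E)

def DisjointSupports (K : ℕ) (μ : ℕ → S → ℝ) : Prop :=
  ∀ k ≤ K, ∀ k' ≤ K, k ≠ k' → ∀ s : S, ¬ (0 < μ k s ∧ 0 < μ k' s)

lemma mass_nonneg {μ : S → ℝ} (h : ∀ s, 0 ≤ μ s) (E : Finset S) : 0 ≤ mass μ E :=
  Finset.sum_nonneg fun s _ => h s

lemma mass_mono {μ : S → ℝ} (h : ∀ s, 0 ≤ μ s) {A B : Finset S} (hAB : A ⊆ B) :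
    mass μ A ≤ mass μ B :=
  Finset.sum_le_sum_of_subset_of_nonneg hAB (fun s _ _ => h s)

lemma mass_BU {μ : S → ℝ} {A E : Finset S} (hA : A ⊆ E) :
    mass (BU μ E) A = mass μ A / mass μ E := by
  unfold mass BU
  rw [Finset.sum_congr rfl (fun s hs => if_pos (hA hs)), Finset.sum_div]
  rfl

lemma isProb_BU {μ : S → ℝ} (h : ∀ s, 0 ≤ μ s) {E : Finset S} (hE : 0 < mass μ E) :
    IsProb (BU μ E) := by
  constructor
  · intro s
    unfold BU
    split
    · exact div_nonneg (h s) hE.le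
    · exact le_refl 0
  · have h1 : ∑ s ∈ E, BU μ E s = ∑ s, BU μ E s :=
      Finset.sum_subset (Finset.subset_univ E) (fun x _ hx => if_neg hx)
    rw [← h1, show ∑ s ∈ E, BU μ E s = mass (BU μ E) E from rfl,
      mass_BU (subset_refl E), div_self hE.ne']

noncomputable def m0ex : Fin 3 → ℝ := ![4/5, 1/10, 1/10]
noncomputable def m1ex : Fin 3 → ℝ := ![0, 3/5, 2/5]

lemma m0ex_nonneg : ∀ s, 0 ≤ m0ex s := by
  intro s; fin_cases s <;> norm_num [m0ex]

lemma m1ex_nonneg : ∀ s, 0 ≤ m1ex s := by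
  intro s; fin_cases s <;> norm_num [m1ex]

lemma m0ex_prob : IsProb m0ex := by
  refine ⟨m0ex_nonneg, ?_⟩
  rw [Fin.sum_univ_three]; norm_num [m0ex, Matrix.cons_val_two, Matrix.tail_cons, Matrix.head_cons]

lemma m1ex_prob : IsProb m1ex := by
  refine ⟨m1ex_nonneg, ?_⟩
  rw [Fin.sum_univ_three]; norm_num [m1ex, Matrix.cons_val_two, Matrix.tail_cons, Matrix.head_cons]

lemma mex_cov : ∀ E : Finset (Fin 3), E.Nonempty →
    (3:ℝ)/10 < mass m0ex E ∨ (3:ℝ)/10 < mass m1ex E := by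
  intro E hE
  have hmem : E ∈ (Finset.univ : Finset (Finset (Fin 3))) := Finset.mem_univ E
  fin_cases hmem <;> simp_all [mass, m0ex, m1ex, Finset.sum_insert] <;> norm_num

lemma mex1 : mass m0ex (Finset.univ : Finset (Fin 3)) = 1 := by
  rw [show mass m0ex Finset.univ = ∑ s, m0ex s from rfl, Fin.sum_univ_three]
  norm_num [m0ex, Matrix.cons_val_two, Matrix.tail_cons, Matrix.head_cons]

lemma mex2 : mass m0ex ({1, 2} : Finset (Fin 3)) = 1/5 := by
  simp [mass, m0ex]; norm_num

lemma mex3 : mass m1ex ({1, 2} : Finset (Fin 3)) = 1 := by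
  simp [mass, m1ex]; norm_num

lemma mex4 : mass m0ex ({1} : Finset (Fin 3)) = 1/10 := by
  simp [mass, m0ex]

lemma mex5 : mass m1ex ({1} : Finset (Fin 3)) = 3/5 := by
  simp [mass, m1ex]

theorem epsilon_os_cps_dichotomy :
    (∀ (S : Type) [Fintype S] [DecidableEq S] [Nonempty S]
        (P : Finset S → S → ℝ) (K : ℕ) (μ : ℕ → S → ℝ),
      (∀ k ≤ K, IsProb (μ k)) →
      (∀ s : S, ∃ k ≤ K, 0 < μ k s) →
      DisjointSupports K μ →
      (∀ E : Finset S, E.Nonempty → ∀ k ≤ K,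
        0 < mass (μ k) E → (∀ j < k, ¬ 0 < mass (μ j) E) → P E = BU (μ k) E) →
      (∀ E : Finset S, E.Nonempty → IsProb (P E)) →
      ((∀ E : Finset S, E.Nonempty → mass (P E) E = 1) ∧
       (∀ G F E : Finset S, G ⊆ F → F ⊆ E → F.Nonempty →
         mass (P E) G = mass (P F) G * mass (P E) F))) ∧
    (∃ (n : ℕ) (P : Finset (Fin n) → Fin n → ℝ) (μ0 μ1 : Fin n → ℝ) (ε : ℝ),
      0 < ε ∧ ε < 1 ∧ IsProb μ0 ∧ IsProb μ1 ∧
      (∀ E : Finset (Fin n), E.Nonempty → IsProb (P E)) ∧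
      (∀ E : Finset (Fin n), E.Nonempty → ε < mass μ0 E ∨ ε < mass μ1 E) ∧
      (∀ E : Finset (Fin n), E.Nonempty →
        (ε < mass μ0 E → P E = BU μ0 E) ∧
        (¬ ε < mass μ0 E → ε < mass μ1 E → P E = BU μ1 E)) ∧
      (∃ G F E : Finset (Fin n), G ⊆ F ∧ F ⊆ E ∧ F.Nonempty ∧
        mass (P E) G ≠ mass (P F) G * mass (P E) F)) := by
  constructor
  · intro S _ _ _ P K μ hprob hcov _ hP _
    have key : ∀ E : Finset S, E.Nonempty →
        ∃ k ≤ K, 0 < mass (μ k) E ∧ (∀ j < k, ¬ 0 < mass (μ j) E) ∧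
          P E = BU (μ k) E := by
      intro E hE
      obtain ⟨s, hs⟩ := hE
      obtain ⟨k0, hk0K, hk0s⟩ := hcov s
      have hex : ∃ k, 0 < mass (μ k) E ∧ k ≤ K := by
        refine ⟨k0, lt_of_lt_of_le hk0s ?_, hk0K⟩
        exact Finset.single_le_sum (fun t _ => (hprob k0 hk0K).1 t) hs
      obtain ⟨hk1, hk2⟩ := Nat.find_spec hex
      have hmin : ∀ j < Nat.find hex, ¬ 0 < mass (μ j) E := by
        intro j hj hjpos
        exact Nat.find_min hex hj ⟨hjpos, le_of_lt (lt_of_lt_of_le hj hk2)⟩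
      exact ⟨Nat.find hex, hk2, hk1,
        hmin, hP E ⟨s, hs⟩ _ hk2 hk1 hmin⟩
    constructor
    · intro E hE
      obtain ⟨k, hkK, hkpos, _, hPE⟩ := key E hE
      rw [hPE, mass_BU (subset_refl E), div_self hkpos.ne']
    · intro G F E hGF hFE hF
      have hE : E.Nonempty := hF.mono hFE
      obtain ⟨k, hkK, hkpos, hkmin, hPE⟩ := key E hE
      obtain ⟨l, hlK, hlpos, hlmin, hPF⟩ := key F hF
      have hnnk : ∀ s, 0 ≤ μ k s := (hprob k hkK).1
      have hnnl : ∀ s, 0 ≤ μ l s := (hprob l hlK).1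
      have hkl : k ≤ l := by
        by_contra h
        push_neg at h
        exact hkmin l h (lt_of_lt_of_le hlpos (mass_mono hnnl hFE))
      rw [hPE, hPF, mass_BU (hGF.trans hFE), mass_BU hGF, mass_BU hFE]
      rcases eq_or_lt_of_le hkl with heq | hlt
      · subst heq
        have hF0 : mass (μ k) F ≠ 0 := by
          intro h0
          exact absurd (h0 ▸ hlpos) (lt_irrefl 0)
        field_simp
      · have hF0 : mass (μ k) F = 0 :=
          le_antisymm (not_lt.mp (hlmin k hlt)) (mass_nonneg hnnk F)
        have hG0 : mass (μ k) G = 0 :=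
          le_antisymm (hF0 ▸ mass_mono hnnk hGF) (mass_nonneg hnnk G)
        rw [hF0, hG0]
        simp
  · classical
    refine ⟨3, fun E => if (3:ℝ)/10 < mass m0ex E then BU m0ex E else BU m1ex E,
      m0ex, m1ex, 3/10, by norm_num, by norm_num, m0ex_prob, m1ex_prob, ?_, mex_cov, ?_, ?_⟩
    · intro E hE
      show IsProb (if (3:ℝ)/10 < mass m0ex E then BU m0ex E else BU m1ex E)
      by_cases h : (3:ℝ)/10 < mass m0ex E
      · rw [if_pos h]
        exact isProb_BU m0ex_nonneg (lt_trans (by norm_num) h)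
      · rw [if_neg h]
        rcases mex_cov E hE with h' | h'
        · exact absurd h' h
        · exact isProb_BU m1ex_nonneg (lt_trans (by norm_num) h')
    · intro E hE
      constructor
      · intro h
        show (if (3:ℝ)/10 < mass m0ex E then BU m0ex E else BU m1ex E) = BU m0ex E
        rw [if_pos h]
      · intro h _
        show (if (3:ℝ)/10 < mass m0ex E then BU m0ex E else BU m1ex E) = BU m1ex E
        rw [if_neg h]
    · refine ⟨{1}, {1, 2}, Finset.univ, by decide, by decide, ⟨1, by decide⟩, ?_⟩
      show mass (if (3:ℝ)/10 < mass m0ex Finset.univ then BU m0ex Finset.univ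
          else BU m1ex Finset.univ) {1} ≠
        mass (if (3:ℝ)/10 < mass m0ex ({1,2} : Finset (Fin 3)) then BU m0ex {1,2}
          else BU m1ex {1,2}) {1} *
        mass (if (3:ℝ)/10 < mass m0ex Finset.univ then BU m0ex Finset.univ
          else BU m1ex Finset.univ) {1, 2}
      rw [if_pos (by rw [mex1]; norm_num), if_neg (by rw [mex2]; norm_num),
        mass_BU (Finset.subset_univ {1}),
        mass_BU (show ({1} : Finset (Fin 3)) ⊆ {1,2} by decide),
        mass_BU (Finset.subset_univ ({1,2} : Finset (Fin 3))),
        mex1, mex2, mex3, mex4, mex5]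
      norm_num
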